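/- arXiv:1803.08216 — 8 statements merged into one kernel-verified Lean document; each statement's English description precedes it below -/
import Mathlib

section
/- For all integers r ≥ 1 and n ≥ 1 and all positive integers d₁, d₂, …, d_r, one has the recursion χ(d₁, d₂, …, d_r; n) = d₁·χ(d₂, …, d_r; n) − (d₁ − 1)·χ(d₁, d₂, …, d_r; n − 1), where the term χ(d₂, …, d_r; n) is given by the same formula in the r − 1 variables d₂, …, d_r (for r = 1 this term is χ(;n) = binom(n+1, n) = n + 1). -/
/-- `hcomplete k d` is the complete homogeneous symmetric polynomial
`h_k(d₁,…,d_r) = ∑_{i₁+⋯+i_r=k} d₁^{i₁}⋯d_r^{i_r}` evaluated at the tuple `d`. -/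
def hcomplete {r : ℕ} (k : ℕ) (d : Fin r → ℤ) : ℤ :=
  ∑ f ∈ Finset.Nat.antidiagonalTuple r k, ∏ j, d j ^ f j

/-- `chi d n = d₁⋯d_r · ∑_{i=0}^{n} (−1)^{n−i} · binom(n+r+1, i) · h_{n−i}(d₁,…,d_r)`,
which by a theorem of Azuma is the degree of the top Chern class of an `n`-dimensional
smooth complete intersection of hypersurfaces of degrees `d₁,…,d_r` in `ℙ^{n+r}`. -/
def chi {r : ℕ} (d : Fin r → ℤ) (n : ℕ) : ℤ :=
  (∏ j, d j) * ∑ i ∈ Finset.range (n + 1),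
    (-1) ^ (n - i) * ((n + r + 1).choose i : ℤ) * hcomplete (n - i) d

lemma hcomplete_zero {r : ℕ} (d : Fin r → ℤ) : hcomplete 0 d = 1 := by
  rw [hcomplete, Finset.Nat.antidiagonalTuple_zero_right]
  simp

lemma hcomplete_decomp {r : ℕ} (k : ℕ) (d : Fin (r + 1) → ℤ) :
    hcomplete k d =
      ∑ p ∈ Finset.HasAntidiagonal.antidiagonal k, d 0 ^ p.1 * hcomplete p.2 (Fin.tail d) := by
  simp only [hcomplete, Finset.mul_sum]
  rw [Finset.sum_sigma']
  refine (Finset.sum_nbij' (fun f => ⟨(f 0, ∑ i, Fin.tail f i), Fin.tail f⟩)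
    (fun x => Fin.cons x.1.1 x.2) ?_ ?_ ?_ ?_ ?_).symm.symm
  · intro f hf
    rw [Finset.Nat.mem_antidiagonalTuple, Fin.sum_univ_succ] at hf
    refine Finset.mem_sigma.mpr ⟨?_, Finset.Nat.mem_antidiagonalTuple.mpr rfl⟩
    rw [Finset.HasAntidiagonal.mem_antidiagonal]
    simpa [Fin.tail] using hf
  · rintro ⟨⟨a, b⟩, g⟩ hx
    rw [Finset.mem_sigma, Finset.HasAntidiagonal.mem_antidiagonal, Finset.Nat.mem_antidiagonalTuple] at hx
    rw [Finset.Nat.mem_antidiagonalTuple, Fin.sum_univ_succ]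
    simp only [Fin.cons_zero, Fin.cons_succ]
    rw [hx.2]; exact hx.1
  · intro f _
    exact Fin.cons_self_tail f
  · rintro ⟨⟨a, b⟩, g⟩ hx
    rw [Finset.mem_sigma, Finset.HasAntidiagonal.mem_antidiagonal, Finset.Nat.mem_antidiagonalTuple] at hx
    have h1 : Fin.tail (Fin.cons a g : Fin (r+1) → ℕ) = g := by
      ext i; simp [Fin.tail]
    simp only [Fin.cons_zero, h1, hx.2]
  · intro f _
    rw [Fin.prod_univ_succ]
    rfl

lemma hcomplete_succ {r : ℕ} (k : ℕ) (d : Fin (r + 1) → ℤ) :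
    hcomplete (k + 1) d = hcomplete (k + 1) (Fin.tail d) + d 0 * hcomplete k d := by
  rw [hcomplete_decomp (k + 1) d, hcomplete_decomp k d, Finset.Nat.antidiagonal_succ,
    Finset.sum_cons, Finset.sum_map]
  simp only [pow_zero, one_mul, Finset.mul_sum]
  congr 1
  apply Finset.sum_congr rfl
  intro p _
  simp [pow_succ, Prod.map]
  ring

/-- The recursion
`χ(d₁, d₂, …, d_r; n) = d₁·χ(d₂, …, d_r; n) − (d₁ − 1)·χ(d₁, d₂, …, d_r; n − 1)`
for `r ≥ 1`, `n ≥ 1` and positive integers `d₁,…,d_r`. -/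
theorem chi_recursion (r n : ℕ) (hn : 1 ≤ n) (d : Fin (r + 1) → ℤ)
    (hd : ∀ i, 0 < d i) :
    chi d n = d 0 * chi (Fin.tail d) n - (d 0 - 1) * chi d (n - 1) := by
  obtain ⟨m, rfl⟩ : ∃ m, n = m + 1 := ⟨n - 1, (Nat.succ_pred_eq_of_pos hn).symm⟩
  have hsub : m + 1 - 1 = m := rfl
  -- notation
  set SB : ℤ := ∑ i ∈ Finset.range (m + 2),
    (-1) ^ (m + 1 - i) * ((m + r + 2).choose i : ℤ) * hcomplete (m + 1 - i) (Fin.tail d) with hSB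
  set SC : ℤ := ∑ i ∈ Finset.range (m + 1),
    (-1) ^ (m - i) * ((m + r + 2).choose i : ℤ) * hcomplete (m - i) d with hSC
  set SA : ℤ := ∑ i ∈ Finset.range (m + 2),
    (-1) ^ (m + 1 - i) * ((m + r + 2).choose i : ℤ) * hcomplete (m + 1 - i) d with hSA
  have hP : (∏ j, d j) = d 0 * ∏ j, Fin.tail d j := by
    rw [Fin.prod_univ_succ]; rfl
  -- Pascal: LHS sum = SA + SC
  have pascal : ∑ i ∈ Finset.range (m + 2),
      (-1) ^ (m + 1 - i) * ((m + r + 3).choose i : ℤ) * hcomplete (m + 1 - i) d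
      = SA + SC := by
    rw [Finset.sum_range_succ' _ (m + 1), hSA, Finset.sum_range_succ' _ (m + 1)]
    have key : ∀ i ∈ Finset.range (m + 1),
        (-1) ^ (m + 1 - (i + 1)) * ((m + r + 3).choose (i + 1) : ℤ)
            * hcomplete (m + 1 - (i + 1)) d
        = (-1) ^ (m + 1 - (i + 1)) * ((m + r + 2).choose (i + 1) : ℤ)
            * hcomplete (m + 1 - (i + 1)) d
          + (-1) ^ (m - i) * ((m + r + 2).choose i : ℤ) * hcomplete (m - i) d := by
      intro i hi
      have h1 : (m + r + 3).choose (i + 1) = (m + r + 2).choose i + (m + r + 2).choose (i + 1) :=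
        Nat.choose_succ_succ (m + r + 2) i
      have h2 : m + 1 - (i + 1) = m - i := by omega
      rw [h1, h2]
      push_cast
      ring
    rw [Finset.sum_congr rfl key, Finset.sum_add_distrib]
    simp only [Nat.choose_zero_right, Nat.cast_one]
    ring
  -- split of h: SA = SB - d 0 * SC
  have hasplit : SA = SB - d 0 * SC := by
    rw [hSA, hSB, Finset.sum_range_succ _ (m + 1), Finset.sum_range_succ _ (m + 1)]
    have key : ∀ i ∈ Finset.range (m + 1),
        (-1) ^ (m + 1 - i) * ((m + r + 2).choose i : ℤ) * hcomplete (m + 1 - i) d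
        = (-1) ^ (m + 1 - i) * ((m + r + 2).choose i : ℤ) * hcomplete (m + 1 - i) (Fin.tail d)
          - d 0 * ((-1) ^ (m - i) * ((m + r + 2).choose i : ℤ) * hcomplete (m - i) d) := by
      intro i hi
      rw [Finset.mem_range] at hi
      have h2 : m + 1 - i = (m - i) + 1 := by omega
      have h3 : (-1 : ℤ) ^ (m + 1 - i) = -(-1) ^ (m - i) := by
        rw [h2, pow_succ]; ring
      rw [h2, hcomplete_succ, ← h2, h3]
      ring
    rw [Finset.sum_congr rfl key, Finset.sum_sub_distrib, ← Finset.mul_sum]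
    have h0 : m + 1 - (m + 1) = 0 := by omega
    rw [h0, hcomplete_zero, hcomplete_zero, hSC]
    ring
  -- assemble
  show chi d (m + 1) = d 0 * chi (Fin.tail d) (m + 1) - (d 0 - 1) * chi d (m + 1 - 1)
  rw [hsub]
  have e1 : chi d (m + 1) = (∏ j, d j) * (SA + SC) := by
    rw [chi, show m + 1 + (r + 1) + 1 = m + r + 3 from by omega, ← pascal]
  have e2 : chi (Fin.tail d) (m + 1) = (∏ j, Fin.tail d j) * SB := by
    rw [chi, show m + 1 + r + 1 = m + r + 2 from by omega, hSB]
  have e3 : chi d m = (∏ j, d j) * SC := by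
    rw [chi, show m + (r + 1) + 1 = m + r + 2 from by omega, hSC]
  rw [e1, e2, e3, hasplit, hP]
  ring
end

section
/- Let d ≥ 3 and n ≥ 1 be integers. If n is even, then χ(d; n) > 0. If n is odd and (n, d) ≠ (1, 3), then χ(d; n) < 0. -/
/-!
For a single hypersurface, multiplying `χ(d; n)` by `d` completes the sum to the binomial
expansion of `(1 - d)^(n+2)`, up to its two top terms:
`d · χ(d; n) = (1 - d)^(n+2) + (n + 2) d - 1`.
For even `n` both summands are positive. For odd `n` the sign is that of
`(n + 2) d - 1 - (d - 1)^(n+2)`, which is negative as soon as the power beats the linear term;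
the only failure with `d ≥ 3` is `n = 1`, `d = 3`, where both sides equal `8`.
-/

open Finset

lemma hcomplete_fin_one (k : ℕ) (d : ℤ) : hcomplete k ![d] = d ^ k := by
  simp [hcomplete, Finset.Nat.antidiagonalTuple_one]

lemma mul_chi_fin_one (d : ℤ) (n : ℕ) :
    d * chi ![d] n = (1 - d) ^ (n + 2) + (n + 2) * d - 1 := by
  have expand : (1 - d) ^ (n + 2) =
      ∑ i ∈ range (n + 3), (-d) ^ (n + 2 - i) * ((n + 2).choose i : ℤ) := by
    rw [sub_eq_add_neg, add_pow]
    simp only [one_pow, one_mul]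
  have low_terms : d * chi ![d] n =
      ∑ i ∈ range (n + 1), (-d) ^ (n + 2 - i) * ((n + 2).choose i : ℤ) := by
    simp only [chi, hcomplete_fin_one, Fin.prod_univ_one, Matrix.cons_val_zero, mul_sum]
    refine sum_congr rfl fun i hi => ?_
    obtain ⟨k, rfl⟩ := Nat.exists_eq_add_of_le (Nat.lt_succ_iff.mp (mem_range.mp hi))
    rw [show i + k + 2 - i = k + 2 by omega, Nat.add_sub_cancel_left, neg_pow]
    ring
  rw [expand, sum_range_succ, sum_range_succ, low_terms, Nat.choose_succ_self_right,
    Nat.choose_self, show n + 2 - (n + 1) = 1 by omega, Nat.sub_self]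
  push_cast
  ring

lemma add_two_mul_succ_sub_one_lt_pow {x : ℤ} (hx : 2 ≤ x) {n : ℕ} (hn : 2 ≤ n) :
    (n + 2) * (x + 1) - 1 < x ^ (n + 2) := by
  induction n, hn using Nat.le_induction with
  | base =>
    have hx2 : 4 ≤ x ^ 2 := by nlinarith
    push_cast
    nlinarith [pow_le_pow_left₀ (by norm_num) hx2 2]
  | succ n hn ih =>
    have hn' : (2 : ℤ) ≤ n := by exact_mod_cast hn
    have grow : x * ((n + 2) * (x + 1) - 1) < x * x ^ (n + 2) :=
      mul_lt_mul_of_pos_left ih (by linarith)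
    have hx1 : (0 : ℤ) ≤ (x - 1) * (x + 1) := mul_nonneg (by linarith) (by linarith)
    rw [pow_succ']
    push_cast
    nlinarith [mul_le_mul_of_nonneg_left hn' hx1]

theorem chi_hypersurface_sign_general (n : ℕ) (d : ℤ) (hd : 3 ≤ d) :
    (Even n → 0 < chi ![d] n) ∧
    (Odd n → ((n : ℕ), d) ≠ (1, 3) → chi ![d] n < 0) := by
  have hd0 : (0 : ℤ) ≤ d := by linarith
  have key := mul_chi_fin_one d n
  refine ⟨fun hn => pos_of_mul_pos_right ?_ hd0, fun hn hne => neg_of_mul_neg_right ?_ hd0⟩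
  · have : 0 < (1 - d) ^ (n + 2) := (hn.add (by decide)).pow_pos (by linarith)
    rw [key]
    nlinarith
  · have power_wins : (n + 2) * d - 1 < (d - 1) ^ (n + 2) := by
      obtain rfl | hn2 : n = 1 ∨ 2 ≤ n := by rcases hn with ⟨k, rfl⟩; omega
      · have : 4 ≤ d := lt_of_le_of_ne hd fun h => hne (by rw [← h])
        push_cast
        nlinarith [sq_nonneg (d - 1)]
      · simpa using add_two_mul_succ_sub_one_lt_pow (x := d - 1) (by linarith) hn2
    rw [key, show (1 - d) ^ (n + 2) = -(d - 1) ^ (n + 2) by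
      rw [← neg_sub, (hn.add_even (by decide)).neg_pow]]
    linarith

/-- For `d ≥ 3` and `n ≥ 1`: if `n` is even then `χ(d; n) > 0`; if `n` is odd and
`(n, d) ≠ (1, 3)` then `χ(d; n) < 0`. -/
theorem chi_hypersurface_sign (n : ℕ) (d : ℤ) (hn : 1 ≤ n) (hd : 3 ≤ d) :
    (Even n → 0 < chi ![d] n) ∧
    (Odd n → ((n : ℕ), d) ≠ (1, 3) → chi ![d] n < 0) :=
  chi_hypersurface_sign_general n d hd
end

section
/- Let n ≥ 2 be an even integer, let r ≥ 2, and let d₁, …, d_r be integers with 2 ≤ d₁ ≤ d₂ ≤ … ≤ d_r and 3 ≤ d_r. Then χ(d₁, …, d_r; n) > (n + 1)·d₁·d₂⋯d_r. -/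
open PowerSeries

noncomputable def Gs (c : ℤ) : PowerSeries ℤ := PowerSeries.mk fun k => c ^ k

lemma Gs_mul_inv (c : ℤ) : (1 - PowerSeries.C c * X) * Gs c = 1 := by
  ext n
  cases n with
  | zero => simp [Gs]
  | succ n =>
    rw [sub_mul, one_mul, mul_assoc, map_sub, coeff_C_mul, coeff_succ_X_mul]
    simp [Gs, pow_succ, mul_comm, coeff_one]

lemma Gs_eq (c : ℤ) : Gs c = 1 + PowerSeries.C c * X * Gs c := by
  linear_combination Gs_mul_inv c

noncomputable def Ps {r : ℕ} (d : Fin r → ℤ) : PowerSeries ℤ := ∏ j, Gs (d j)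

lemma coeff_Ps {r : ℕ} (d : Fin r → ℤ) (k : ℕ) :
    PowerSeries.coeff k (Ps d) = hcomplete k d := by
  rw [Ps, PowerSeries.coeff_prod, hcomplete]
  refine Finset.sum_nbij' (fun l => (l : Fin r → ℕ))
    (fun f => Finsupp.equivFunOnFinite.symm f) ?_ ?_ ?_ ?_ ?_
  · intro l hl
    simp only [Finset.mem_finsuppAntidiag] at hl
    simp [Finset.Nat.mem_antidiagonalTuple, ← hl.1]
  · intro f hf
    simp only [Finset.Nat.mem_antidiagonalTuple] at hf
    simp only [Finset.mem_finsuppAntidiag]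
    constructor
    · rw [← hf]
      exact Finset.sum_congr rfl (fun j _ => by simp)
    · exact Finset.subset_univ _
  · intro l _; simp
  · intro f _; exact Finsupp.coe_equivFunOnFinite_symm f
  · intro l _
    exact Finset.prod_congr rfl (fun j _ => by simp [Gs])

lemma coeff_one_sub_X_pow (m i : ℕ) :
    PowerSeries.coeff i ((1 - X : PowerSeries ℤ) ^ m) = (-1) ^ i * (m.choose i : ℤ) := by
  induction m generalizing i with
  | zero =>
    cases i with
    | zero => simp
    | succ i => simp [coeff_one]
  | succ m ih =>
    have : ((1 - X : PowerSeries ℤ)) ^ (m + 1)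
        = (1 - X) ^ m - (1 - X) ^ m * X := by ring
    rw [this, map_sub]
    cases i with
    | zero => simp [ih, coeff_zero_eq_constantCoeff, map_mul]
    | succ i =>
      rw [coeff_succ_mul_X, ih, ih, Nat.choose_succ_succ]
      push_cast
      ring

lemma hzero {r : ℕ} (e : Fin r → ℤ) : hcomplete 0 e = 1 := by
  simp [hcomplete, Finset.Nat.antidiagonalTuple_zero_right]

lemma hcomplete_fin_zero (e : Fin 0 → ℤ) (k : ℕ) :
    hcomplete k e = if k = 0 then 1 else 0 := by
  cases k with
  | zero => simp [hzero]
  | succ k => simp [hcomplete, Finset.Nat.antidiagonalTuple_zero_succ]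

lemma Ps_succ {r : ℕ} (e : Fin (r + 1) → ℤ) :
    Ps e = Ps (fun j : Fin r => e j.castSucc)
      + PowerSeries.C (e (Fin.last r)) * X * Ps e := by
  have h : Ps e = Ps (fun j : Fin r => e j.castSucc) * Gs (e (Fin.last r)) :=
    Fin.prod_univ_castSucc _
  rw [h]
  linear_combination (Ps (fun j : Fin r => e j.castSucc)) * Gs_eq (e (Fin.last r))

lemma hrec {r : ℕ} (e : Fin (r + 1) → ℤ) (k : ℕ) :
    hcomplete (k + 1) e = hcomplete (k + 1) (fun j : Fin r => e j.castSucc)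
      + e (Fin.last r) * hcomplete k e := by
  rw [← coeff_Ps, ← coeff_Ps, ← coeff_Ps]
  conv_lhs => rw [Ps_succ e]
  rw [map_add, mul_assoc, coeff_C_mul, coeff_succ_X_mul]

def psi {r : ℕ} (e : Fin r → ℤ) (n : ℕ) : ℤ :=
  ∑ k ∈ Finset.range (n + 1), (-1) ^ (n - k) * ((n : ℤ) + 1 - (k : ℤ)) * hcomplete k e

lemma psi_rec {r : ℕ} (e : Fin (r + 1) → ℤ) (n : ℕ) :
    psi e (n + 1) = psi (fun j : Fin r => e j.castSucc) (n + 1)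
      + e (Fin.last r) * psi e n := by
  have hs : ∀ (f : ℕ → ℤ), ∑ k ∈ Finset.range (n + 1 + 1), f k
      = (∑ k ∈ Finset.range (n + 1), f (k + 1)) + f 0 :=
    fun f => Finset.sum_range_succ' f (n + 1)
  rw [psi, psi, psi, hs, hs, Finset.mul_sum]
  have step : ∑ k ∈ Finset.range (n + 1),
      (-1 : ℤ) ^ (n + 1 - (k + 1)) * ((n + 1 : ℤ) + 1 - ((k : ℤ) + 1)) * hcomplete (k + 1) e
      = ∑ k ∈ Finset.range (n + 1),
        ((-1 : ℤ) ^ (n + 1 - (k + 1)) * ((n + 1 : ℤ) + 1 - ((k : ℤ) + 1))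
            * hcomplete (k + 1) (fun j : Fin r => e j.castSucc)
          + e (Fin.last r) * ((-1) ^ (n - k) * ((n : ℤ) + 1 - (k : ℤ)) * hcomplete k e)) := by
    apply Finset.sum_congr rfl
    intro k _
    rw [hrec, Nat.succ_sub_succ]
    ring
  push_cast at step ⊢
  rw [step, Finset.sum_add_distrib, hzero, hzero]
  ring

lemma main_id {r : ℕ} (d : Fin r → ℤ) (n : ℕ) :
    PowerSeries.coeff n ((1 - X : PowerSeries ℤ) ^ (n + 1)
        * ∏ j, ((1 - X) * Gs (d j)))
      = psi (fun j => d j - 1) n := by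
  induction r generalizing n with
  | zero =>
    have : (∏ j : Fin 0, ((1 - X : PowerSeries ℤ) * Gs (d j))) = 1 := by simp
    rw [this, mul_one, coeff_one_sub_X_pow, psi]
    simp only [hcomplete_fin_zero]
    rw [Finset.sum_eq_single 0]
    · simp [Nat.choose_succ_self_right]
    · intro k _ hk; simp [hk]
    · intro h; simp at h
  | succ r ih =>
    induction n with
    | zero =>
      rw [PowerSeries.coeff_zero_eq_constantCoeff, map_mul, map_pow, map_prod]
      simp only [map_mul, map_sub, map_one, PowerSeries.constantCoeff_X, sub_zero, one_pow,
        one_mul]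
      have hg : ∀ c : ℤ, PowerSeries.constantCoeff (Gs c) = 1 := by
        intro c; simp [Gs]
      simp only [hg, mul_one, Finset.prod_const_one, one_mul, psi]
      simp [hzero]
    | succ n ihn =>
      set Q : PowerSeries ℤ := ∏ j : Fin r, ((1 - X) * Gs (d j.castSucc)) with hQ
      have hprod : (∏ j : Fin (r + 1), ((1 - X : PowerSeries ℤ) * Gs (d j)))
          = Q * ((1 - X) * Gs (d (Fin.last r))) := Fin.prod_univ_castSucc _
      have hCl : (PowerSeries.C (d (Fin.last r) - 1))
          = PowerSeries.C (d (Fin.last r)) - 1 := by rw [map_sub, map_one]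
      have key : (1 - X : PowerSeries ℤ) ^ (n + 1 + 1)
            * ∏ j : Fin (r + 1), ((1 - X) * Gs (d j))
          = (1 - X) ^ (n + 1 + 1) * Q
            + PowerSeries.C (d (Fin.last r) - 1) * X
              * ((1 - X) ^ (n + 1)
                * ∏ j : Fin (r + 1), ((1 - X) * Gs (d j))) := by
        rw [hprod, hCl]
        linear_combination ((1 - X : PowerSeries ℤ) ^ (n + 1 + 1) * Q)
          * Gs_mul_inv (d (Fin.last r))
      rw [key, map_add, mul_assoc, coeff_C_mul, coeff_succ_X_mul, ihn, ih, psi_rec]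

lemma chi_eq {r : ℕ} (d : Fin r → ℤ) (n : ℕ) (hn : Even n) :
    chi d n = (∏ j, d j) * psi (fun j => d j - 1) n := by
  rw [chi]
  congr 1
  have h1 : (∑ i ∈ Finset.range (n + 1),
        (-1 : ℤ) ^ (n - i) * ((n + r + 1).choose i : ℤ) * hcomplete (n - i) d)
      = PowerSeries.coeff n ((1 - X : PowerSeries ℤ) ^ (n + r + 1) * Ps d) := by
    rw [PowerSeries.coeff_mul, Finset.Nat.sum_antidiagonal_eq_sum_range_succ_mk]
    apply Finset.sum_congr rfl
    intro i hi
    rw [coeff_one_sub_X_pow, coeff_Ps]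
    have hi' : i ≤ n := by simpa [Nat.lt_succ_iff] using hi
    have hsign : (-1 : ℤ) ^ (n - i) = (-1) ^ i := by
      rcases Nat.even_or_odd i with h | h
      · have h2 : Even (n - i) := (Nat.even_sub hi').mpr (iff_of_true hn h)
        simp [h.neg_one_pow, h2.neg_one_pow]
      · have h2 : Odd (n - i) := by
          rw [Nat.odd_sub hi']
          exact iff_of_false (Nat.not_odd_iff_even.mpr hn) (Nat.not_even_iff_odd.mpr h)
        simp [h.neg_one_pow, h2.neg_one_pow]
    rw [hsign]
  rw [h1]
  have h2 : (1 - X : PowerSeries ℤ) ^ (n + r + 1) * Ps d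
      = (1 - X) ^ (n + 1) * ∏ j, ((1 - X) * Gs (d j)) := by
    rw [Ps, Finset.prod_mul_distrib, Finset.prod_const, Finset.card_univ, Fintype.card_fin]
    ring
  rw [h2, main_id]

lemma hpos {r : ℕ} (e : Fin (r + 1) → ℤ) (he : ∀ j, 1 ≤ e j) (k : ℕ) :
    1 ≤ hcomplete k e := by
  have hmem : (Pi.single (0 : Fin (r + 1)) k : Fin (r + 1) → ℕ)
      ∈ Finset.Nat.antidiagonalTuple (r + 1) k := by
    rw [Finset.Nat.mem_antidiagonalTuple]
    simp
  have hterm : ∀ (f : Fin (r + 1) → ℕ), 1 ≤ ∏ j, e j ^ f j := by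
    intro f
    calc (1 : ℤ) = ∏ _j : Fin (r + 1), 1 := by simp
    _ ≤ ∏ j, e j ^ f j := by
        apply Finset.prod_le_prod (fun i _ => zero_le_one)
        intro i _
        exact one_le_pow₀ (he i)
  calc (1 : ℤ) ≤ ∏ j, e j ^ (Pi.single (0 : Fin (r + 1)) k : Fin (r + 1) → ℕ) j :=
        hterm _
  _ ≤ hcomplete k e := by
      apply Finset.single_le_sum (f := fun f : Fin (r + 1) → ℕ => ∏ j, e j ^ f j)
        (fun f _ => le_trans zero_le_one (hterm f)) hmem

lemma pair_sum (a : ℕ → ℤ) (s : ℕ) :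
    ∑ k ∈ Finset.range (2 * s + 1), a k
      = a 0 + ∑ m ∈ Finset.range s, (a (2 * m + 1) + a (2 * m + 2)) := by
  induction s with
  | zero => simp
  | succ s ih =>
    rw [show 2 * (s + 1) + 1 = (2 * s + 1) + 1 + 1 from by ring,
      Finset.sum_range_succ, Finset.sum_range_succ, ih, Finset.sum_range_succ]
    ring

/-- For even `n ≥ 2`, `r ≥ 2` and integers `2 ≤ d₁ ≤ … ≤ d_r` with `3 ≤ d_r`:
`χ(d₁,…,d_r; n) > (n + 1)·d₁·d₂⋯d_r`. -/
theorem chi_ci_lower_bound (n r : ℕ) (hn : 2 ≤ n) (hneven : Even n) (hr : 2 ≤ r)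
    (d : Fin r → ℤ) (hmono : Monotone d)
    (h1 : 2 ≤ d ⟨0, by omega⟩) (h2 : 3 ≤ d ⟨r - 1, by omega⟩) :
    ((n : ℤ) + 1) * ∏ j, d j < chi d n := by
  obtain ⟨r', rfl⟩ : ∃ r', r = r' + 2 := ⟨r - 2, by omega⟩
  set e : Fin (r' + 2) → ℤ := fun j => d j - 1 with he_def
  have hd : ∀ j, 2 ≤ d j := by
    intro j
    calc (2 : ℤ) ≤ d ⟨0, by omega⟩ := h1
    _ ≤ d j := hmono (Fin.le_def.mpr (Nat.zero_le _))
  have he : ∀ j, 1 ≤ e j := fun j => by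
    have := hd j; simp only [he_def]; linarith
  have h2' : 3 ≤ d (Fin.last (r' + 1)) := h2
  have hel : 2 ≤ e (Fin.last (r' + 1)) := by
    simp only [he_def]; linarith
  have hgrow : ∀ k, 2 * hcomplete k e + 1 ≤ hcomplete (k + 1) e := by
    intro k
    rw [hrec]
    have hpi : 1 ≤ hcomplete (k + 1) (fun j : Fin (r' + 1) => e j.castSucc) :=
      hpos _ (fun j => he _) _
    have hpk : 1 ≤ hcomplete k e := hpos e he k
    nlinarith [hel]
  obtain ⟨s, hs⟩ := hneven
  have hneven' : Even n := ⟨s, hs⟩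
  have hs1 : 1 ≤ s := by omega
  have hpsi : (n : ℤ) + 1 + s ≤ psi e n := by
    have hrange : n + 1 = 2 * s + 1 := by omega
    rw [psi, hrange, pair_sum]
    have ha0 : (-1 : ℤ) ^ (n - 0) * ((n : ℤ) + 1 - ((0 : ℕ) : ℤ)) * hcomplete 0 e
        = (n : ℤ) + 1 := by
      rw [hzero, Nat.sub_zero, hneven'.neg_one_pow]; push_cast; ring
    have hpair : ∀ m ∈ Finset.range s,
        (1 : ℤ) ≤ ((-1) ^ (n - (2 * m + 1)) * ((n : ℤ) + 1 - ((2 * m + 1 : ℕ) : ℤ))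
            * hcomplete (2 * m + 1) e
          + (-1) ^ (n - (2 * m + 2)) * ((n : ℤ) + 1 - ((2 * m + 2 : ℕ) : ℤ))
            * hcomplete (2 * m + 2) e) := by
      intro m hm
      rw [Finset.mem_range] at hm
      have hodd : Odd (n - (2 * m + 1)) := ⟨s - m - 1, by omega⟩
      have heven : Even (n - (2 * m + 2)) := ⟨s - m - 1, by omega⟩
      rw [hodd.neg_one_pow, heven.neg_one_pow]
      have hk1 := hpos e he (2 * m + 1)
      have hk2 := hgrow (2 * m + 1)
      have hcast : ((2 * m + 2 : ℕ) : ℤ) ≤ (n : ℤ) := by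
        exact_mod_cast Nat.cast_le.mpr (by omega : 2 * m + 2 ≤ n)
      push_cast at hcast ⊢
      nlinarith
    calc (n : ℤ) + 1 + s = ((n : ℤ) + 1) + ∑ _m ∈ Finset.range s, (1 : ℤ) := by
          rw [Finset.sum_const, Finset.card_range]; ring
    _ ≤ _ := by
        rw [ha0]
        exact add_le_add_right (Finset.sum_le_sum hpair) _
  rw [chi_eq d n hneven']
  have hD : 0 < ∏ j, d j := Finset.prod_pos (fun j _ => by linarith [hd j])
  have hlt : (n : ℤ) + 1 < psi e n := by
    have hscast : (1 : ℤ) ≤ (s : ℤ) := by exact_mod_cast hs1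
    linarith
  calc ((n : ℤ) + 1) * ∏ j, d j < psi e n * ∏ j, d j :=
        mul_lt_mul_of_pos_right hlt hD
  _ = (∏ j, d j) * psi e n := mul_comm _ _
end

section
/- For every integer n ≥ 1: if n is even then χ(2, 2; n) = 2·(n + 2), and if n is odd then χ(2, 2; n) = 0. (In particular, the degree of the top Chern class of an odd-dimensional smooth complete intersection of two quadrics is zero.) -/
/-! For two hypersurfaces of the same degree `a` one has `h_k(a, a) = (k + 1) a^k`, and reversing
the order of summation gives `χ(a, a; n) = a² ∑_j (j + 1) C(n+3, j+3) (-a)^j`. Up to the factor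
`(-a)³` this is the tail `m ≥ 3` of `∑_m (m - 2) C(n+3, m) y^m` at `y = -a`, which the binomial
theorem and its derivative evaluate in closed form. At `a = 2` the closed form only involves
powers of `1 - a = -1`, whence the parity dichotomy. -/

open Finset

theorem hcomplete_pair_const (k : ℕ) (a : ℤ) : hcomplete k ![a, a] = (k + 1) * a ^ k := by
  have hterm : ∀ p ∈ antidiagonal k,
      ∏ j, ![a, a] j ^ (piFinTwoEquiv fun _ => ℕ).symm.toEmbedding p j = a ^ k := by
    rintro ⟨i, j⟩ hij
    rw [HasAntidiagonal.mem_antidiagonal] at hij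
    simp [Fin.prod_univ_two, ← pow_add, hij]
  rw [hcomplete, Nat.antidiagonalTuple_two, sum_map, sum_congr rfl hterm, sum_const,
    Nat.card_antidiagonal, nsmul_eq_mul]
  push_cast
  ring

theorem chi_pair_const_eq_sum (a : ℤ) (n : ℕ) :
    chi ![a, a] n =
      a ^ 2 * ∑ j ∈ range (n + 1), (j + 1) * ((n + 3).choose (j + 3) : ℤ) * (-a) ^ j := by
  rw [chi, Fin.prod_univ_two, ← sum_range_reflect]
  simp only [Matrix.cons_val_zero, Matrix.cons_val_one, Matrix.cons_val_fin_one, ← sq]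
  congr 1
  refine sum_congr rfl fun j hj => ?_
  have hjn : j ≤ n := mem_range_succ_iff.mp hj
  rw [show n + 1 - 1 - j = n - j by omega, Nat.sub_sub_self hjn, hcomplete_pair_const,
    show n + 2 + 1 = n + 3 by rfl, show n - j = n + 3 - (j + 3) by omega,
    Nat.choose_symm (by omega), neg_pow]
  ring

section Binomial

variable {R : Type*} [CommRing R]

theorem sum_range_choose_mul_pow (N : ℕ) (x : R) :
    ∑ m ∈ range (N + 1), (N.choose m : R) * x ^ m = (1 + x) ^ N := by
  rw [add_comm 1 x, add_pow]
  exact sum_congr rfl fun m _ => by ring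

theorem sum_range_mul_choose_mul_pow (N : ℕ) (x : R) :
    ∑ m ∈ range (N + 2), (m : R) * ((N + 1).choose m : R) * x ^ m =
      (N + 1) * x * (1 + x) ^ N := by
  have hterm : ∀ m ∈ range (N + 1),
      ((m + 1 : ℕ) : R) * ((N + 1).choose (m + 1) : R) * x ^ (m + 1) =
        (N + 1) * x * ((N.choose m : R) * x ^ m) := by
    intro m _
    have h := congrArg (Nat.cast (R := R)) (Nat.add_one_mul_choose_eq N m)
    push_cast at h ⊢
    linear_combination x ^ (m + 1) * h.symm
  rw [sum_range_succ', sum_congr rfl hterm, ← mul_sum, sum_range_choose_mul_pow]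
  simp

end Binomial

theorem mul_chi_pair_const (a : ℤ) (n : ℕ) :
    a * chi ![a, a] n =
      2 * (1 - a) ^ (n + 3) + (n + 3) * a * (1 - a) ^ (n + 2) + (n + 3) * a - 2 := by
  set y := -a
  have hsplit : ∑ m ∈ range (n + 4), ((m : ℤ) - 2) * ((n + 3).choose m : ℤ) * y ^ m =
      -2 - (n + 3) * y +
        y ^ 3 * ∑ j ∈ range (n + 1), (j + 1) * ((n + 3).choose (j + 3) : ℤ) * y ^ j := by
    have hterm : ∀ j ∈ range (n + 1),
        (((3 + j : ℕ) : ℤ) - 2) * ((n + 3).choose (3 + j) : ℤ) * y ^ (3 + j) =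
          y ^ 3 * ((j + 1) * ((n + 3).choose (j + 3) : ℤ) * y ^ j) := by
      intro j _
      rw [add_comm 3 j]
      push_cast
      ring
    rw [show n + 4 = 3 + (n + 1) by ring, sum_range_add, sum_congr rfl hterm, mul_sum]
    simp only [sum_range_succ, sum_range_zero, Nat.choose_zero_right, Nat.choose_one_right]
    push_cast
    ring
  have htotal : ∑ m ∈ range (n + 4), ((m : ℤ) - 2) * ((n + 3).choose m : ℤ) * y ^ m =
      (n + 3) * y * (1 + y) ^ (n + 2) - 2 * (1 + y) ^ (n + 3) := by
    simp only [sub_mul, sum_sub_distrib, mul_assoc (2 : ℤ), ← mul_sum]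
    rw [sum_range_mul_choose_mul_pow (n + 2) y, sum_range_choose_mul_pow]
    push_cast
    ring
  rw [chi_pair_const_eq_sum]
  linear_combination hsplit - htotal

theorem chi_two_quadrics_general (n : ℕ) :
    (Even n → chi ![(2 : ℤ), 2] n = 2 * ((n : ℤ) + 2)) ∧
    (Odd n → chi ![(2 : ℤ), 2] n = 0) := by
  have h := mul_chi_pair_const 2 n
  norm_num [pow_add] at h
  constructor
  · intro he
    rw [he.neg_one_pow] at h
    linarith
  · intro ho
    rw [ho.neg_one_pow] at h
    linarith

/-- For `n ≥ 1`: if `n` is even then `χ(2, 2; n) = 2·(n + 2)`, and if `n` is odd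
then `χ(2, 2; n) = 0`. -/
theorem chi_two_quadrics (n : ℕ) (hn : 1 ≤ n) :
    (Even n → chi ![(2 : ℤ), 2] n = 2 * ((n : ℤ) + 2)) ∧
    (Odd n → chi ![(2 : ℤ), 2] n = 0) :=
  chi_two_quadrics_general n
end

section
/- Let r ≥ 3 and let n ≥ 2 be an even integer with (n, r) ≠ (2, 3), and let χ(2, …, 2; n) denote χ evaluated at r copies of 2. Then χ(2, …, 2; n) > 2^r · (n + 1). Moreover, in the excluded case one has equality: χ(2, 2, 2; 2) = 24 = 2³·(2 + 1). -/
/-!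
Since `h_k(c,…,c) = multichoose r k · c^k`, Azuma's formula says that `χ(c,…,c; n)` is
`(-1)^n c^r` times the coefficient of `x^n` in `(1 - x)^(n+r+1) (1 - c x)^(-r)`. For `c = 2`
call this coefficient `V(r, n)` (`chiQuad r n`). Writing `1 - x = (1 - 2x) + x` gives the recursion
`V(r+1, n+1) = V(r, n+1) + V(r+1, n)`, with `V(r, 0) = 1` and `V(0, n) = (-1)^n (n+1)`.
So `V(2, ·) = 1, 0, 2, 0, 3, 0, …` and `V(3, 2m) = (m+1)(m+2)/2`, and for `r ≥ 2` the
`V(r, ·)` are nonnegative and increase with `r`. From this, `V(r, 2m) > 2m + 1`, and the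
only exception is `V(3, 2) = 3`.
-/

open Finset PowerSeries

theorem card_antidiagonalTuple (r k : ℕ) :
    #(Nat.antidiagonalTuple r k) = r.multichoose k := by
  rw [← piAntidiag_univ_fin_eq_antidiagonalTuple]
  simpa [finsuppAntidiag] using
    card_finsuppAntidiag_nat_eq_multichoose (s := (univ : Finset (Fin r))) k

theorem hcomplete_const (r k : ℕ) (c : ℤ) :
    hcomplete k (fun _ : Fin r => c) = r.multichoose k * c ^ k := by
  rw [hcomplete, sum_congr rfl fun f hf => by
      rw [prod_pow_eq_pow_sum, Nat.mem_antidiagonalTuple.mp hf],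
    sum_const, card_antidiagonalTuple, nsmul_eq_mul]

section
variable {R : Type*} [CommRing R]

theorem coeff_one_sub_X_pow_s8 (N i : ℕ) :
    coeff i ((1 - X) ^ N : R⟦X⟧) = (-1) ^ i * N.choose i := by
  induction N generalizing i with
  | zero => cases i <;> simp
  | succ N ih =>
    cases i with
    | zero => simp
    | succ i =>
      rw [pow_succ', sub_mul, one_mul, map_sub, coeff_succ_X_mul, ih, ih, Nat.choose_succ_succ']
      push_cast; ring

/-- `∑ₖ h_k(c,…,c) Xᵏ`, i.e. `(1 - c X)^(-r)`. -/
noncomputable def hcompleteSeries (r : ℕ) (c : R) : R⟦X⟧ :=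
  mk fun k => (r.multichoose k : R) * c ^ k

theorem one_sub_C_mul_X_mul_hcompleteSeries_succ (r : ℕ) (c : R) :
    (1 - C c * X) * hcompleteSeries (r + 1) c = hcompleteSeries r c := by
  ext (_ | k)
  · simp [hcompleteSeries, Nat.multichoose_zero_right]
  · rw [sub_mul, one_mul, mul_assoc, map_sub, coeff_C_mul, coeff_succ_X_mul]
    simp only [hcompleteSeries, coeff_mk, Nat.multichoose_succ_succ]
    push_cast; ring

end

theorem chi_const (r n : ℕ) (c : ℤ) :
    chi (fun _ : Fin r => c) n =
      (-1) ^ n * c ^ r * coeff n ((1 - X) ^ (n + r + 1) * hcompleteSeries r c) := by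
  rw [chi, PowerSeries.coeff_mul, Finset.Nat.sum_antidiagonal_eq_sum_range_succ_mk, prod_const,
    card_univ, Fintype.card_fin, mul_sum, mul_sum]
  refine sum_congr rfl fun i hi => ?_
  have hsign : (-1 : ℤ) ^ n = (-1) ^ (n - i) * (-1) ^ i := by
    rw [← pow_add, Nat.sub_add_cancel (Nat.lt_succ_iff.mp (mem_range.mp hi))]
  rw [hcomplete_const, coeff_one_sub_X_pow_s8, hcompleteSeries, coeff_mk, hsign]
  ring_nf
  simp

noncomputable def chiQuad (r n : ℕ) : ℤ :=
  coeff n ((1 - X) ^ (n + r + 1) * hcompleteSeries r 2)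

theorem chi_two_eq_chiQuad (r n : ℕ) :
    chi (fun _ : Fin r => (2 : ℤ)) n = (-1) ^ n * 2 ^ r * chiQuad r n :=
  chi_const r n 2

theorem chiQuad_succ_succ (r n : ℕ) :
    chiQuad (r + 1) (n + 1) = chiQuad r (n + 1) + chiQuad (r + 1) n := by
  have hsplit : (1 - X) * hcompleteSeries (r + 1) (2 : ℤ) =
      hcompleteSeries r 2 + X * hcompleteSeries (r + 1) 2 := by
    rw [← one_sub_C_mul_X_mul_hcompleteSeries_succ r, map_ofNat]
    ring
  calc chiQuad (r + 1) (n + 1)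
      = coeff (n + 1) ((1 - X) ^ (n + 1 + r + 1) * ((1 - X) * hcompleteSeries (r + 1) 2)) := by
        rw [chiQuad]; ring_nf
    _ = chiQuad r (n + 1) +
          coeff (n + 1) (X * ((1 - X) ^ (n + (r + 1) + 1) * hcompleteSeries (r + 1) 2)) := by
        rw [hsplit, mul_add, map_add, chiQuad]; ring_nf
    _ = chiQuad r (n + 1) + chiQuad (r + 1) n := by
        rw [coeff_succ_X_mul]; rfl

theorem chiQuad_zero_right (r : ℕ) : chiQuad r 0 = 1 := by
  simp [chiQuad, hcompleteSeries, Nat.multichoose_zero_right]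

theorem chiQuad_zero_left (n : ℕ) : chiQuad 0 n = (-1) ^ n * (n + 1) := by
  have hone : hcompleteSeries 0 (2 : ℤ) = 1 := by
    ext (_ | k) <;> simp [hcompleteSeries, Nat.multichoose_zero_right, Nat.multichoose_zero_succ]
  rw [chiQuad, hone, mul_one, coeff_one_sub_X_pow_s8, add_zero, Nat.choose_succ_self_right]
  push_cast; ring

theorem chiQuad_one (m : ℕ) :
    chiQuad 1 (2 * m) = m + 1 ∧ chiQuad 1 (2 * m + 1) = -(m + 1) := by
  induction m with
  | zero => simp [chiQuad_succ_succ 0 0, chiQuad_zero_left, chiQuad_zero_right]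
  | succ m ih =>
    have h₀ := chiQuad_succ_succ 0 (2 * m + 1)
    have h₁ := chiQuad_succ_succ 0 (2 * m + 2)
    simp only [chiQuad_zero_left, zero_add, pow_add, pow_mul, neg_one_sq, one_pow, pow_one]
      at h₀ h₁
    rw [Nat.mul_succ]
    push_cast at *
    constructor <;> linarith [ih.1, ih.2]

theorem chiQuad_two (m : ℕ) :
    chiQuad 2 (2 * m) = m + 1 ∧ chiQuad 2 (2 * m + 1) = 0 := by
  induction m with
  | zero => simp [chiQuad_succ_succ 1 0, (chiQuad_one 0).2, chiQuad_zero_right]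
  | succ m ih =>
    have h₀ := chiQuad_succ_succ 1 (2 * m + 1)
    have h₁ := chiQuad_succ_succ 1 (2 * m + 2)
    have h₂ := chiQuad_one (m + 1)
    rw [Nat.mul_succ] at h₂ ⊢
    push_cast at *
    constructor <;> linarith [ih.1, ih.2, h₂.1, h₂.2]

theorem two_mul_chiQuad_three (m : ℕ) : 2 * chiQuad 3 (2 * m) = (m + 1) * (m + 2) := by
  induction m with
  | zero => simp [chiQuad_zero_right]
  | succ m ih =>
    have h₀ := chiQuad_succ_succ 2 (2 * m + 1)
    have h₁ := chiQuad_succ_succ 2 (2 * m)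
    have h₂ := (chiQuad_two (m + 1)).1
    have h₃ := (chiQuad_two m).2
    rw [Nat.mul_succ] at h₂ ⊢
    push_cast at *
    linarith

theorem chiQuad_nonneg {r : ℕ} (hr : 2 ≤ r) (n : ℕ) : 0 ≤ chiQuad r n := by
  induction r, hr using Nat.le_induction generalizing n with
  | base =>
    obtain ⟨m, rfl | rfl⟩ := Nat.even_or_odd' n
    · rw [(chiQuad_two m).1]; positivity
    · rw [(chiQuad_two m).2]
  | succ r hr ih =>
    induction n with
    | zero => rw [chiQuad_zero_right]; positivity
    | succ n ihn => rw [chiQuad_succ_succ]; linarith [ih (n + 1)]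

theorem chiQuad_le_succ_left {r : ℕ} (hr : 2 ≤ r) (n : ℕ) :
    chiQuad r n ≤ chiQuad (r + 1) n := by
  cases n with
  | zero => rw [chiQuad_zero_right, chiQuad_zero_right]
  | succ n => rw [chiQuad_succ_succ]; linarith [chiQuad_nonneg (r := r + 1) (by omega) n]

theorem chiQuad_mono_left {r r' : ℕ} (hr : 2 ≤ r) (h : r ≤ r') (n : ℕ) :
    chiQuad r n ≤ chiQuad r' n := by
  induction r', h using Nat.le_induction with
  | base => rfl
  | succ r' hr' ih => exact ih.trans (chiQuad_le_succ_left (hr.trans hr') n)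

theorem one_le_chiQuad {r : ℕ} (hr : 3 ≤ r) (n : ℕ) : 1 ≤ chiQuad r n := by
  obtain ⟨s, rfl⟩ : ∃ s, r = s + 1 := ⟨r - 1, by omega⟩
  induction n with
  | zero => rw [chiQuad_zero_right]
  | succ n ih => rw [chiQuad_succ_succ]; linarith [chiQuad_nonneg (r := s) (by omega) (n + 1)]

theorem lt_chiQuad_of_even {r n : ℕ} (hr : 3 ≤ r) (hn : 2 ≤ n) (he : Even n)
    (hne : (n, r) ≠ (2, 3)) : (n : ℤ) + 1 < chiQuad r n := by
  obtain ⟨m, rfl⟩ := even_iff_two_dvd.mp he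
  have h₃ := two_mul_chiQuad_three m
  rcases hr.eq_or_lt with rfl | hr
  · have hm : 2 ≤ m := by
      have : 2 * m ≠ 2 := fun h => hne (by rw [h])
      omega
    push_cast
    nlinarith
  · obtain ⟨k, rfl⟩ : ∃ k, m = k + 1 := ⟨m - 1, by omega⟩
    have h₄ : chiQuad 4 (2 * (k + 1)) = chiQuad 3 (2 * (k + 1)) + chiQuad 4 (2 * k + 1) :=
      chiQuad_succ_succ 3 (2 * k + 1)
    have h₅ := one_le_chiQuad (r := 4) (by norm_num) (2 * k + 1)
    have h₆ := chiQuad_mono_left (by norm_num) hr (2 * (k + 1))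
    push_cast at *
    nlinarith

/-- For `r ≥ 3` and even `n ≥ 2` with `(n, r) ≠ (2, 3)`, with `χ(2,…,2; n)` denoting
`χ` at `r` copies of `2`: `χ(2,…,2; n) > 2^r·(n + 1)`; moreover in the excluded case
there is equality `χ(2, 2, 2; 2) = 24 = 2³·(2 + 1)`. -/
theorem chi_quadrics_lower_bound :
    (∀ r n : ℕ, 3 ≤ r → 2 ≤ n → Even n → ((n : ℕ), (r : ℕ)) ≠ (2, 3) →
      (2 : ℤ) ^ r * ((n : ℤ) + 1) < chi (fun _ : Fin r => (2 : ℤ)) n) ∧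
    chi (fun _ : Fin 3 => (2 : ℤ)) 2 = 24 ∧ (24 : ℤ) = 2 ^ 3 * (2 + 1) := by
  refine ⟨fun r n hr hn he hne => ?_, ?_, by norm_num⟩
  · rw [chi_two_eq_chiQuad, he.neg_one_pow, one_mul]
    exact mul_lt_mul_of_pos_left (lt_chiQuad_of_even hr hn he hne) (by positivity)
  · have h := two_mul_chiQuad_three 1
    rw [chi_two_eq_chiQuad]
    norm_num at h ⊢
    linarith
end

section
/- For every natural number n, one has the integer identity 3 · ∑_{i=0}^{n} (6·binom(n, i + 2) + 5·binom(n, i + 1) + binom(n, i)) · (−6)^i = 3n + 2 + (−5)ⁿ. Equivalently, ∑_{i=0}^{n} e_{n−i}(3, 2, 1ⁿ) · (−6)^i = (3n + 2 + (−5)ⁿ)/3, where e_k(3, 2, 1ⁿ) denotes the k-th elementary symmetric function of the multiset consisting of 3, 2, and n copies of 1. (This computes the degree of the top Chern class of a smooth del Pezzo variety of dimension n and degree one, realized as a degree-6 weighted hypersurface in ℙ(3, 2, 1, …, 1).) -/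
/-!
Vieta's formula identifies `e_{n-i}(a, b, 1ⁿ)` with the coefficient of `X^(i+2)` in
`(X + a)(X + b)(X + 1)ⁿ`, i.e. with `C(n,i) + (a+b) C(n,i+1) + ab C(n,i+2)`. Each of the three
resulting sums `∑ᵢ C(n,i+k) yⁱ`, multiplied by `yᵏ`, is the binomial expansion of `(1 + y)ⁿ`
without its first `k` terms; at `y = -6` this leaves only `(-5)ⁿ` and the terms `1` and `-6n`.
-/

open Finset Polynomial

theorem one_add_pow_eq_sum_range_choose {R : Type*} [CommSemiring R] (y : R) {n N : ℕ}
    (hN : n < N) : (1 + y) ^ n = ∑ j ∈ range N, (n.choose j : R) * y ^ j := by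
  rw [add_comm, add_pow]
  refine sum_subset (range_subset_range.2 hN) (fun j hjN hjn => ?_) |>.trans
    (sum_congr rfl fun j _ => by rw [one_pow, mul_one, mul_comm])
  rw [Nat.choose_eq_zero_of_lt (by simpa using hjn), Nat.cast_zero, mul_zero]

theorem pow_mul_sum_choose_add_mul_pow {R : Type*} [CommRing R] (y : R) (n k : ℕ) :
    y ^ k * ∑ i ∈ range (n + 1), (n.choose (i + k) : R) * y ^ i
      = (1 + y) ^ n - ∑ j ∈ range k, (n.choose j : R) * y ^ j := by
  rw [one_add_pow_eq_sum_range_choose y (show n < k + (n + 1) by omega), sum_range_add _ k,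
    add_sub_cancel_left, mul_sum]
  refine sum_congr rfl fun i _ => ?_
  rw [add_comm i k, pow_add]
  ring

theorem esymm_pair_add_replicate_one {R : Type*} [CommRing R] (a b : R) {n i : ℕ} (hi : i ≤ n) :
    (({a, b} : Multiset R) + Multiset.replicate n 1).esymm (n - i)
      = n.choose i + (a + b) * n.choose (i + 1) + a * b * n.choose (i + 2) := by
  set s : Multiset R := {a, b} + Multiset.replicate n 1
  have hcard : Multiset.card s = n + 2 := by simp [s]
  have hprod : (s.map fun r => X + C r).prod
      = (X ^ 2 + C (a + b) * X + C (a * b)) * (X + 1) ^ n := by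
    simp [s, Multiset.map_replicate]
    ring
  rw [show n - i = Multiset.card s - (i + 2) by omega,
    ← Multiset.prod_X_add_C_coeff s (by omega), hprod]
  simp [add_mul, mul_assoc, coeff_X_add_one_pow, coeff_X_pow_mul', coeff_X_mul, coeff_C_mul]

theorem three_mul_sum_choose_mul_neg_six_pow (n : ℕ) :
    3 * ∑ i ∈ range (n + 1),
        (6 * (n.choose (i + 2) : ℤ) + 5 * (n.choose (i + 1) : ℤ) + (n.choose i : ℤ)) * (-6) ^ i
      = 3 * (n : ℤ) + 2 + (-5) ^ n := by
  have h0 := pow_mul_sum_choose_add_mul_pow (-6 : ℤ) n 0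
  have h1 := pow_mul_sum_choose_add_mul_pow (-6 : ℤ) n 1
  have h2 := pow_mul_sum_choose_add_mul_pow (-6 : ℤ) n 2
  rw [sum_range_zero] at h0
  rw [sum_range_one] at h1
  rw [sum_range_succ _ 1, sum_range_one] at h2
  norm_num at h0 h1 h2
  simp only [add_mul, sum_add_distrib, mul_assoc, ← mul_sum]
  linarith

/-- `3·∑_{i=0}^{n} (6·binom(n, i+2) + 5·binom(n, i+1) + binom(n, i))·(−6)^i = 3n + 2 + (−5)ⁿ`;
equivalently `∑_{i=0}^{n} e_{n−i}(3, 2, 1ⁿ)·(−6)^i = (3n + 2 + (−5)ⁿ)/3`, where `e_k(3, 2, 1ⁿ)`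
is the `k`-th elementary symmetric function of the multiset consisting of `3`, `2` and `n`
copies of `1`.  This is the degree of the top Chern class of a smooth del Pezzo variety of
dimension `n` and degree one. -/
theorem delPezzo_degree_one_chern (n : ℕ) :
    3 * ∑ i ∈ Finset.range (n + 1),
        (6 * (n.choose (i + 2) : ℤ) + 5 * (n.choose (i + 1) : ℤ) + (n.choose i : ℤ))
          * (-6) ^ i
      = 3 * (n : ℤ) + 2 + (-5) ^ n ∧
    (∑ i ∈ Finset.range (n + 1),
        (((({3, 2} : Multiset ℤ) + Multiset.replicate n 1).esymm (n - i) : ℤ) : ℚ)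
          * (-6) ^ i)
      = (3 * (n : ℚ) + 2 + (-5) ^ n) / 3 := by
  set M : Multiset ℤ := {3, 2} + Multiset.replicate n 1
  have hchoose := three_mul_sum_choose_mul_neg_six_pow n
  have hesymm : ∀ i ∈ range (n + 1), M.esymm (n - i)
      = 6 * (n.choose (i + 2) : ℤ) + 5 * (n.choose (i + 1) : ℤ) + (n.choose i : ℤ) := by
    intro i hi
    rw [esymm_pair_add_replicate_one 3 2 (Nat.lt_succ_iff.1 (mem_range.1 hi))]
    ring
  have hesymm_sum : 3 * ∑ i ∈ range (n + 1), M.esymm (n - i) * (-6) ^ i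
      = 3 * (n : ℤ) + 2 + (-5) ^ n := by
    rwa [sum_congr rfl fun i hi => by rw [hesymm i hi]]
  refine ⟨hchoose, ?_⟩
  rw [eq_div_iff three_ne_zero, mul_comm]
  exact_mod_cast hesymm_sum
end

section
/- For every natural number n, one has the integer identity 8 · ∑_{i=0}^{n} (2·binom(n + 1, i + 2) + binom(n + 1, i + 1)) · (−4)^i = 4n + 5 − (−3)^{n+1}. Equivalently, 2·∑_{i=0}^{n} e_{n−i}(2, 1^{n+1}) · (−4)^i = (4n + 5 − (−3)^{n+1})/4, where e_k(2, 1^{n+1}) denotes the k-th elementary symmetric function of the multiset consisting of 2 and n + 1 copies of 1. (This computes the degree of the top Chern class of a smooth del Pezzo variety of dimension n and degree two, realized as a degree-4 weighted hypersurface in ℙ(2, 1, …, 1).) -/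
/-!
For `M = {a} + 1^m` one has `e_j(M) = a·binom(m, i+2) + binom(m, i+1)` whenever `j + i + 1 = m`,
so both sums are the same integer `S = ∑_{i ≤ n} e_{n-i}(M) x^i`. Then `x² S` is the polynomial
`∑_k e_k(M) x^{m+1-k} = (x + a)(1 + x)^m` with its two lowest-order terms `a + (m·a + 1)x`
removed. At `m = n + 1`, `a = 2`, `x = -4` this reads `16 S = 8n + 10 - 2(-3)^(n+1)`.
-/

open Finset

namespace Multiset

variable {R : Type*} [CommSemiring R]

theorem esymm_zero (s : Multiset R) : s.esymm 0 = 1 := by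
  simp [esymm]

theorem esymm_cons_succ (a : R) (s : Multiset R) (k : ℕ) :
    (a ::ₘ s).esymm (k + 1) = s.esymm (k + 1) + a * s.esymm k := by
  simp only [esymm, powersetCard_cons, map_add, sum_add, map_map, Function.comp_def, prod_cons,
    sum_map_mul_left]

theorem esymm_replicate (m k : ℕ) (x : R) :
    (replicate m x).esymm k = m.choose k * x ^ k := by
  induction m generalizing k with
  | zero => cases k <;> simp [esymm, powersetCard_zero_right]
  | succ m ih =>
    cases k with
    | zero => simp [esymm_zero]
    | succ k =>
      rw [replicate_succ, esymm_cons_succ, ih, ih, Nat.choose_succ_succ']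
      push_cast
      ring

theorem esymm_cons_replicate_one (a : R) {m i j : ℕ} (h : j + i + 1 = m) :
    (a ::ₘ replicate m 1).esymm j = a * m.choose (i + 2) + m.choose (i + 1) := by
  cases j with
  | zero =>
    rw [esymm_zero, Nat.choose_eq_zero_of_lt (by omega), ← h]
    simp
  | succ j =>
    rw [esymm_cons_succ, esymm_replicate, esymm_replicate, one_pow, one_pow, mul_one, mul_one,
      add_comm, Nat.choose_symm_of_eq_add (by omega : m = j + (i + 2)),
      Nat.choose_symm_of_eq_add (by omega : m = j + 1 + (i + 1))]

end Multiset

section Binomial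

variable {R : Type*} [CommSemiring R]

theorem one_add_pow_succ_eq (x : R) (n : ℕ) :
    (1 + x) ^ (n + 1) = 1 + x * ∑ i ∈ range (n + 1), ((n + 1).choose (i + 1) : R) * x ^ i := by
  rw [add_comm, add_pow, sum_range_succ', mul_sum]
  simp only [one_pow, mul_one, pow_zero, Nat.choose_zero_right, Nat.cast_one, add_comm]
  congr 1
  exact sum_congr rfl fun i _ => by ring

theorem sum_choose_succ_mul_pow (x : R) (n : ℕ) :
    ∑ i ∈ range (n + 1), ((n + 1).choose (i + 1) : R) * x ^ i
      = (n + 1) + x * ∑ i ∈ range (n + 1), ((n + 1).choose (i + 2) : R) * x ^ i := by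
  rw [sum_range_succ', sum_range_succ _ n, Nat.choose_eq_zero_of_lt (by omega : n + 1 < n + 2)]
  simp only [zero_add, Nat.choose_one_right, pow_zero, mul_one, Nat.cast_zero, zero_mul, add_zero,
    mul_sum]
  push_cast
  rw [add_comm]
  congr 1
  exact sum_congr rfl fun i _ => by ring

end Binomial

theorem sq_mul_sum_choose_mul_pow {R : Type*} [CommRing R] (x a : R) (n : ℕ) :
    x ^ 2 * ∑ i ∈ range (n + 1), (a * (n + 1).choose (i + 2) + (n + 1).choose (i + 1)) * x ^ i
      = (x + a) * (1 + x) ^ (n + 1) - a - ((n + 1) * a + 1) * x := by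
  have hpow := one_add_pow_succ_eq x n
  have hshift := sum_choose_succ_mul_pow x n
  simp only [add_mul, sum_add_distrib, mul_assoc, ← mul_sum]
  linear_combination (-x - a) * hpow - a * x * hshift

/-- `8·∑_{i=0}^{n} (2·binom(n+1, i+2) + binom(n+1, i+1))·(−4)^i = 4n + 5 − (−3)^{n+1}`;
equivalently `2·∑_{i=0}^{n} e_{n−i}(2, 1^{n+1})·(−4)^i = (4n + 5 − (−3)^{n+1})/4`, where
`e_k(2, 1^{n+1})` is the `k`-th elementary symmetric function of the multiset consisting
of `2` and `n + 1` copies of `1`.  This is the degree of the top Chern class of a smooth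
del Pezzo variety of dimension `n` and degree two. -/
theorem delPezzo_degree_two_chern (n : ℕ) :
    8 * ∑ i ∈ Finset.range (n + 1),
        (2 * ((n + 1).choose (i + 2) : ℤ) + ((n + 1).choose (i + 1) : ℤ)) * (-4) ^ i
      = 4 * (n : ℤ) + 5 - (-3) ^ (n + 1) ∧
    2 * (∑ i ∈ Finset.range (n + 1),
        (((({2} : Multiset ℤ) + Multiset.replicate (n + 1) 1).esymm (n - i) : ℤ) : ℚ)
          * (-4) ^ i)
      = (4 * (n : ℚ) + 5 - (-3) ^ (n + 1)) / 4 := by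
  have hchern : 8 * ∑ i ∈ Finset.range (n + 1),
        (2 * ((n + 1).choose (i + 2) : ℤ) + ((n + 1).choose (i + 1) : ℤ)) * (-4) ^ i
      = 4 * (n : ℤ) + 5 - (-3) ^ (n + 1) := by
    have h := sq_mul_sum_choose_mul_pow (-4 : ℤ) 2 n
    norm_num at h
    linarith
  refine ⟨hchern, ?_⟩
  have hesymm : ∀ i ∈ range (n + 1),
      (({2} : Multiset ℤ) + Multiset.replicate (n + 1) 1).esymm (n - i)
        = 2 * ((n + 1).choose (i + 2) : ℤ) + ((n + 1).choose (i + 1) : ℤ) := fun i hi => by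
    rw [Multiset.singleton_add, Multiset.esymm_cons_replicate_one 2 (i := i) (by grind)]
  have hcast := congrArg (Int.cast : ℤ → ℚ) hchern
  push_cast at hcast
  rw [sum_congr rfl fun i hi => congrArg (fun z : ℤ => (z : ℚ) * (-4) ^ i) (hesymm i hi)]
  push_cast
  linear_combination hcast / 4
end

section
/- Let n ≥ 1 and let Ω be an invertible 2n × 2n complex matrix with Ωᵀ = −Ω. Let A be the (1 + 2n) × (1 + 2n) complex block matrix A = fromBlocks 0 0 0 Ω, i.e., A has a 1×1 zero block in the upper-left corner, zero off-diagonal blocks, and Ω in the lower-right 2n × 2n block. Then an invertible (1 + 2n) × (1 + 2n) complex matrix g satisfies gᵀ · A · g = A if and only if g = fromBlocks λ ℓ 0 S for some nonzero scalar λ ∈ ℂ (a 1×1 block), some 1 × 2n row vector ℓ, and some 2n × 2n matrix S with Sᵀ · Ω · S = Ω. (For Ω the standard rank-2n symplectic form on ℂ^{2n+1}, this identifies the odd symplectic group Sp(2n+1) = {g ∈ GL(2n+1, ℂ) : ω(gu, gv) = ω(u, v)} with the group of block upper-triangular matrices (λ, ℓ; 0, S) with λ ∈ ℂ*, ℓ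 ∈ ℂ^{2n}, S ∈ Sp(2n), giving its Levi decomposition Sp(2n+1) ≅ (ℂ* × Sp(2n)) ⋉ ℂ^{2n}.) -/
/-!
Write `g` in blocks `(a, b; c, d)` with respect to `ℂ ⊕ ℂ^{2n}`. Then `gᵀ A g` has blocks
`(cᵀΩc, cᵀΩd; dᵀΩc, dᵀΩd)`. Comparing lower-right blocks gives `dᵀΩd = Ω`, which forces `d`
to be invertible since `Ω` is; the lower-left block `dᵀΩc = 0` then forces `c = 0`. Finally
`g` is block upper triangular, so its invertibility makes the `1 × 1` block `a` nonzero.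
-/

namespace Matrix

variable {m n R : Type*} [Fintype m] [Fintype n] [CommRing R]

theorem eta_fin_one {α : Type*} (A : Matrix (Fin 1) (Fin 1) α) : A = !![A 0 0] :=
  Matrix.ext fun i j => by rw [Subsingleton.elim i 0, Subsingleton.elim j 0]; rfl

theorem fromBlocks_transpose_mul_fromBlocks_zero_mul (A : Matrix m m R) (B : Matrix m n R)
    (C : Matrix n m R) (D Ω : Matrix n n R) :
    (fromBlocks A B C D)ᵀ * fromBlocks 0 0 0 Ω * fromBlocks A B C D =
      fromBlocks (Cᵀ * Ω * C) (Cᵀ * Ω * D) (Dᵀ * Ω * C) (Dᵀ * Ω * D) := by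
  simp [fromBlocks_transpose, fromBlocks_multiply]

variable [DecidableEq n]

theorem isUnit_of_transpose_mul_mul_eq {Ω S : Matrix n n R} (hΩ : IsUnit Ω)
    (hS : Sᵀ * Ω * S = Ω) : IsUnit S := by
  rw [isUnit_iff_isUnit_det] at hΩ ⊢
  have hdet : S.det * (S.det * Ω.det) = Ω.det := by
    simpa only [det_mul, det_transpose, mul_comm, mul_left_comm] using congrArg det hS
  exact isUnit_of_mul_isUnit_left (isUnit_of_mul_isUnit_right (hdet ▸ hΩ))

theorem fromBlocks_transpose_mul_fromBlocks_zero_mul_eq_iff {Ω : Matrix n n R} (hΩ : IsUnit Ω)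
    (A : Matrix m m R) (B : Matrix m n R) (C : Matrix n m R) (D : Matrix n n R) :
    (fromBlocks A B C D)ᵀ * fromBlocks 0 0 0 Ω * fromBlocks A B C D = fromBlocks 0 0 0 Ω ↔
      C = 0 ∧ Dᵀ * Ω * D = Ω := by
  rw [fromBlocks_transpose_mul_fromBlocks_zero_mul, fromBlocks_inj]
  constructor
  · rintro ⟨-, -, hC, hD⟩
    have hDunit := isUnit_of_transpose_mul_mul_eq hΩ hD
    have hDΩ : IsUnit (Dᵀ * Ω).det :=
      (isUnit_iff_isUnit_det _).mp (((isUnit_transpose _).mpr hDunit).mul hΩ)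
    refine ⟨?_, hD⟩
    rw [← nonsing_inv_mul_cancel_left _ C hDΩ, hC, Matrix.mul_zero]
  · rintro ⟨rfl, hD⟩
    simp [hD]

end Matrix

open Matrix

theorem odd_symplectic_group_block_form_general (n : ℕ)
    (Ω : Matrix (Fin (2 * n)) (Fin (2 * n)) ℂ) (hΩ : IsUnit Ω)
    (g : Matrix (Fin 1 ⊕ Fin (2 * n)) (Fin 1 ⊕ Fin (2 * n)) ℂ) (hg : IsUnit g) :
    gᵀ * Matrix.fromBlocks 0 0 0 Ω * g = Matrix.fromBlocks 0 0 0 Ω ↔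
      ∃ (lam : ℂ) (ℓ : Matrix (Fin 1) (Fin (2 * n)) ℂ)
        (S : Matrix (Fin (2 * n)) (Fin (2 * n)) ℂ),
        lam ≠ 0 ∧ Sᵀ * Ω * S = Ω ∧ g = Matrix.fromBlocks !![lam] ℓ 0 S := by
  obtain ⟨A, B, C, D, rfl⟩ : ∃ A B C D, g = fromBlocks A B C D :=
    ⟨_, _, _, _, (fromBlocks_toBlocks g).symm⟩
  rw [fromBlocks_transpose_mul_fromBlocks_zero_mul_eq_iff hΩ]
  constructor
  · rintro ⟨rfl, hD⟩
    rw [eta_fin_one A] at hg ⊢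
    refine ⟨_, B, D, ?_, hD, rfl⟩
    simpa [isUnit_iff_isUnit_det, det_fin_one_of] using (isUnit_fromBlocks_zero₂₁.mp hg).1
  · rintro ⟨lam, ℓ, S, -, hS, hg⟩
    rw [fromBlocks_inj] at hg
    exact ⟨hg.2.2.1, hg.2.2.2 ▸ hS⟩

/-- Let `Ω` be an invertible skew-symmetric `2n × 2n` complex matrix and let
`A = fromBlocks 0 0 0 Ω`.  An invertible `(1 + 2n) × (1 + 2n)` complex matrix `g`
satisfies `gᵀ·A·g = A` if and only if `g = fromBlocks λ ℓ 0 S` for some nonzero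
scalar `λ`, some row vector `ℓ` and some matrix `S` with `Sᵀ·Ω·S = Ω`.  This is the
description of the odd symplectic group `Sp(2n+1)` giving its Levi decomposition
`Sp(2n+1) ≅ (ℂ* × Sp(2n)) ⋉ ℂ^{2n}`. -/
theorem odd_symplectic_group_block_form (n : ℕ) (hn : 1 ≤ n)
    (Ω : Matrix (Fin (2 * n)) (Fin (2 * n)) ℂ) (hΩ : IsUnit Ω) (hskew : Ωᵀ = -Ω)
    (g : Matrix (Fin 1 ⊕ Fin (2 * n)) (Fin 1 ⊕ Fin (2 * n)) ℂ) (hg : IsUnit g) :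
    gᵀ * Matrix.fromBlocks 0 0 0 Ω * g = Matrix.fromBlocks 0 0 0 Ω ↔
      ∃ (lam : ℂ) (ℓ : Matrix (Fin 1) (Fin (2 * n)) ℂ)
        (S : Matrix (Fin (2 * n)) (Fin (2 * n)) ℂ),
        lam ≠ 0 ∧ Sᵀ * Ω * S = Ω ∧ g = Matrix.fromBlocks !![lam] ℓ 0 S :=
  odd_symplectic_group_block_form_general n Ω hΩ g hg
end
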